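/- Let P be a poset and π↑, π↓ : P → P satisfy (i) π↓(x) ≤ x ≤ π↑(x), (ii) π↑∘π↑ = π↑∘π↓ = π↑ and π↓∘π↓ = π↓∘π↑ = π↓, (iii) π↑, π↓ order preserving. Then for every z in the image of π↓, the fiber π↓⁻¹(z) equals the interval [z, π↑(z)], i.e. π↓(x) = z if and only if z ≤ x ≤ π↑(z). -/
import Mathlib

/-- for maps `up`, `dn` on a poset satisfying the order-congruence
projection conditions, for every `z` in the image of `dn`, the fiber of `dn`
over `z` is exactly the interval `[z, up z]`. -/
theorem stmt1 {P : Type*} [PartialOrder P] (up dn : P → P)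
    (hdn_le : ∀ x : P, dn x ≤ x) (hle_up : ∀ x : P, x ≤ up x)
    (h_up_up : up ∘ up = up) (h_up_dn : up ∘ dn = up)
    (h_dn_dn : dn ∘ dn = dn) (h_dn_up : dn ∘ up = dn)
    (h_up_mono : Monotone up) (h_dn_mono : Monotone dn) :
    ∀ z ∈ Set.range dn, ∀ x : P, dn x = z ↔ (z ≤ x ∧ x ≤ up z) := by
  rintro z ⟨w, rfl⟩ x
  have hz : dn (dn w) = dn w := congrFun h_dn_dn w
  constructor
  · intro h
    refine ⟨h ▸ hdn_le x, ?_⟩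
    calc x ≤ up x := hle_up x
      _ = up (dn x) := (congrFun h_up_dn x).symm
      _ = up (dn w) := by rw [h]
  · rintro ⟨h1, h2⟩
    apply le_antisymm
    · calc dn x ≤ dn (up (dn w)) := h_dn_mono h2
        _ = dn (dn w) := congrFun h_dn_up (dn w)
        _ = dn w := hz
    · calc dn w = dn (dn w) := hz.symm
        _ ≤ dn x := h_dn_mono h1
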